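/- For every connected graph G, b_g(G) ≤ rad(G) + 1 and b_g'(G) ≤ min{rad(G) + 2, diam(G) + 1}. -/
import Mathlib


namespace BurningGame

/-- One spreading phase: all neighbors of burned vertices become burned. -/
noncomputable def spread {V : Type*} [Fintype V] [DecidableEq V] (G : SimpleGraph V) (B : Finset V) : Finset V :=
  ((↑B : Set V) ∪ {v | ∃ u ∈ B, G.Adj u v}).toFinite.toFinset

/-- `EndBy G turn i B k`: starting from burned set `B` at round index `i`
(the player selecting in round `i` is Burner iff `turn i = true`; Burner's selections are
quantified existentially, Staller's universally), Burner can force the game to end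
within `k` further rounds. -/
def EndBy {V : Type*} [Fintype V] [DecidableEq V] (G : SimpleGraph V) (turn : ℕ → Bool) :
    ℕ → Finset V → ℕ → Prop
  | _, B, 0 => B = Finset.univ
  | i, B, k + 1 => B = Finset.univ ∨
      spread G B = Finset.univ ∨
      (if turn i then ∃ v ∉ spread G B, EndBy G turn (i + 1) (insert v (spread G B)) k
       else ∀ v ∉ spread G B, EndBy G turn (i + 1) (insert v (spread G B)) k)

/-- Game burning number relative to a preburned set `S` (Burner starts). -/
noncomputable def bgRel {V : Type*} [Fintype V] [DecidableEq V] (G : SimpleGraph V) (S : Finset V) : ℕ :=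
  sInf {k | EndBy G (fun i => i % 2 == 0) 0 S k}

/-- The game burning number (Burner starts). -/
noncomputable def bg {V : Type*} [Fintype V] [DecidableEq V] (G : SimpleGraph V) : ℕ := bgRel G ∅

/-- The Staller-start game burning number. -/
noncomputable def bg' {V : Type*} [Fintype V] [DecidableEq V] (G : SimpleGraph V) : ℕ :=
  sInf {k | EndBy G (fun i => i % 2 == 1) 0 ∅ k}

/-- The burning number: only Burner plays. -/
noncomputable def burn {V : Type*} [Fintype V] [DecidableEq V] (G : SimpleGraph V) : ℕ :=
  sInf {k | EndBy G (fun _ => true) 0 ∅ k}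

/-- The cooling number: only Staller plays. -/
noncomputable def cool {V : Type*} [Fintype V] [DecidableEq V] (G : SimpleGraph V) : ℕ :=
  sInf {k | EndBy G (fun _ => false) 0 ∅ k}


/-- Eccentricity of a vertex. -/
noncomputable def ecc {V : Type*} [Fintype V] (G : SimpleGraph V) (v : V) : ℕ :=
  Finset.univ.sup (fun u => G.dist v u)

/-- Radius of a graph. -/
noncomputable def radius {V : Type*} [Fintype V] (G : SimpleGraph V) : ℕ :=
  sInf (Set.range (ecc G))

/-- Diameter of a graph. -/
noncomputable def diam {V : Type*} [Fintype V] (G : SimpleGraph V) : ℕ :=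
  sSup (Set.range (ecc G))

lemma mem_spread {V : Type*} [Fintype V] [DecidableEq V] (G : SimpleGraph V) (B : Finset V)
    (v : V) : v ∈ spread G B ↔ v ∈ B ∨ ∃ u ∈ B, G.Adj u v := by
  simp [spread]

lemma subset_spread {V : Type*} [Fintype V] [DecidableEq V] (G : SimpleGraph V) (B : Finset V) :
    B ⊆ spread G B := fun v hv => (mem_spread G B v).2 (Or.inl hv)

lemma dist_le_ecc {V : Type*} [Fintype V] (G : SimpleGraph V) (c v : V) :
    G.dist c v ≤ ecc G c := Finset.le_sup (Finset.mem_univ v)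

/-- Key lemma: if the ball of radius `ecc c - k` around `c` is already burned, then the
game ends within `k` more rounds, regardless of the players' moves. -/
lemma endBy_of_ball {V : Type*} [Fintype V] [DecidableEq V] (G : SimpleGraph V)
    (hG : G.Connected) (turn : ℕ → Bool) (c : V) :
    ∀ k i (B : Finset V), (∀ v, G.dist c v ≤ ecc G c - k → v ∈ B) → EndBy G turn i B k := by
  intro k
  induction k with
  | zero =>
    intro i B h
    show B = Finset.univ
    rw [Finset.eq_univ_iff_forall]
    intro v
    exact h v (by simpa using dist_le_ecc G c v)
  | succ k IH =>
    intro i B h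
    have key : ∀ v, G.dist c v ≤ ecc G c - k → v ∈ spread G B := by
      intro v hv
      by_cases h1 : G.dist c v ≤ ecc G c - (k + 1)
      · exact subset_spread G B (h v h1)
      · have hpos : 0 < G.dist c v := by omega
        have hreach : G.Reachable v c := (hG v c)
        obtain ⟨q, hq⟩ := hreach.exists_walk_length_eq_dist
        cases q with
        | nil => simp [SimpleGraph.dist_self] at hpos
        | @cons _ w _ hadj q' =>
          have hw : G.dist c w ≤ q'.length := by
            rw [SimpleGraph.dist_comm]; exact SimpleGraph.dist_le q'
          have hq'l : q'.length = G.dist c v - 1 := by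
            simp only [SimpleGraph.Walk.length_cons] at hq
            rw [SimpleGraph.dist_comm] at hq
            omega
          have hwB : w ∈ B := h w (by omega)
          exact (mem_spread G B v).2 (Or.inr ⟨w, hwB, hadj.symm⟩)
    by_cases hs : spread G B = Finset.univ
    · exact Or.inr (Or.inl hs)
    · refine Or.inr (Or.inr ?_)
      have hstep : ∀ v, EndBy G turn (i + 1) (insert v (spread G B)) k := by
        intro v
        exact IH (i + 1) _ (fun u hu => Finset.mem_insert_of_mem (key u hu))
      split
      · rw [Finset.eq_univ_iff_forall] at hs
        push_neg at hs
        obtain ⟨v, hv⟩ := hs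
        exact ⟨v, hv, hstep v⟩
      · exact fun v _ => hstep v

theorem stmt1 {V : Type*} [Fintype V] [DecidableEq V] (G : SimpleGraph V)
    (hG : G.Connected) :
    bg G ≤ radius G + 1 ∧ bg' G ≤ min (radius G + 2) (diam G + 1) := by
  have hne : Nonempty V := hG.nonempty
  -- a center
  have hmem : radius G ∈ Set.range (ecc G) := Nat.sInf_mem (Set.range_nonempty _)
  obtain ⟨c, hc⟩ := hmem
  have spread_empty : spread G (∅ : Finset V) = ∅ := by
    ext v; simp [mem_spread]
  have hEempty : (∅ : Finset V) ≠ Finset.univ := by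
    intro h
    obtain ⟨v⟩ := hne
    have : v ∈ (∅ : Finset V) := h ▸ Finset.mem_univ v
    simp at this
  have dist_zero : ∀ v : V, G.dist c v ≤ 0 → v = c := by
    intro v hv
    have h0 : G.dist c v = 0 := Nat.le_zero.mp hv
    rcases SimpleGraph.dist_eq_zero_iff_eq_or_not_reachable.mp h0 with h | h
    · exact h.symm
    · exact absurd (hG c v) h
  constructor
  ·
    have hEnd : EndBy G (fun i => i % 2 == 0) 0 (∅ : Finset V) (ecc G c + 1) := by
      refine Or.inr (Or.inr ?_)
      simp only [Nat.zero_mod, beq_self_eq_true, if_true]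
      refine ⟨c, by simp [spread_empty], ?_⟩
      apply endBy_of_ball G hG _ c
      intro v hv
      rw [Nat.sub_self] at hv
      obtain rfl := dist_zero v hv
      exact Finset.mem_insert_self _ _
    have : bg G ≤ ecc G c + 1 := Nat.sInf_le hEnd
    omega
  · -- Staller-start
    refine le_min ?_ ?_
    · -- radius + 2 bound
      have hEnd : EndBy G (fun i => i % 2 == 1) 0 (∅ : Finset V) (ecc G c + 2) := by
        refine Or.inr (Or.inr ?_)
        simp only [Nat.zero_mod]
        norm_num
        intro v _
        -- Round 1 : Burner's turn; burn the center (or anything if it's already burning).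
        set B1 := insert v (spread G (∅ : Finset V)) with hB1
        by_cases hs : spread G B1 = Finset.univ
        · exact Or.inr (Or.inl hs)
        · refine Or.inr (Or.inr ?_)
          norm_num
          by_cases hcin : c ∈ spread G B1
          · rw [Finset.eq_univ_iff_forall] at hs
            push_neg at hs
            obtain ⟨w, hw⟩ := hs
            refine ⟨w, hw, ?_⟩
            apply endBy_of_ball G hG _ c
            intro u hu
            rw [Nat.sub_self] at hu
            obtain rfl := dist_zero u hu
            exact Finset.mem_insert_of_mem hcin
          · refine ⟨c, hcin, ?_⟩
            apply endBy_of_ball G hG _ c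
            intro u hu
            rw [Nat.sub_self] at hu
            obtain rfl := dist_zero u hu
            exact Finset.mem_insert_self _ _
      have : bg' G ≤ ecc G c + 2 := Nat.sInf_le hEnd
      omega
    · -- diam + 1 bound
      have hbdd : BddAbove (Set.range (ecc G)) := (Set.finite_range _).bddAbove
      have hEnd : EndBy G (fun i => i % 2 == 1) 0 (∅ : Finset V) (diam G + 1) := by
        refine Or.inr (Or.inr ?_)
        simp only [Nat.zero_mod]
        norm_num
        intro v _
        apply endBy_of_ball G hG _ v
        intro u hu
        have hecc : ecc G v ≤ diam G := le_csSup hbdd ⟨v, rfl⟩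
        have : G.dist v u ≤ 0 := le_trans hu (by omega)
        have h0 : G.dist v u = 0 := Nat.le_zero.mp this
        rcases SimpleGraph.dist_eq_zero_iff_eq_or_not_reachable.mp h0 with h | h
        · exact h ▸ Finset.mem_insert_self v _
        · exact absurd (hG v u) h
      exact Nat.sInf_le hEnd

end BurningGame
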